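/- arXiv:2602.15353 — 2 statements merged into one kernel-verified Lean document; each statement's English description precedes it below -/
import Mathlib

section
/- Let n ≥ 2, u : Fin n → ℝ, τ > 0, and let i* be an index with u i < u i* for all i ≠ i*, with utility gap Δ = min_{i ≠ i*} (u i* − u i) > 0. Then the softmax probability of the maximal action satisfies π_τ(i*) ≥ 1 / (1 + (n − 1) · exp(−Δ/τ)). -/
/-! Every non-maximal weight `exp (u i / τ)` is at most `exp (-Δ / τ)` times the maximal one,
so the partition function is at most `exp (u i* / τ) (1 + (n - 1) exp (-Δ / τ))`. -/

open Finset Real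

variable {ι : Type*} [Fintype ι] [DecidableEq ι]

theorem sum_exp_le_of_forall_ne_le_sub (x : ι → ℝ) (i : ι) (c : ℝ)
    (hgap : ∀ j ≠ i, x j ≤ x i - c) :
    ∑ j, exp (x j) ≤ exp (x i) * (1 + (Fintype.card ι - 1) * exp (-c)) := by
  have hrest : ∀ j ∈ univ.erase i, exp (x j) ≤ exp (x i) * exp (-c) := fun j hj => by
    rw [← exp_add, ← sub_eq_add_neg]
    exact exp_le_exp.2 (hgap j (ne_of_mem_erase hj))
  calc ∑ j, exp (x j) = exp (x i) + ∑ j ∈ univ.erase i, exp (x j) :=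
        (add_sum_erase _ _ (mem_univ i)).symm
    _ ≤ exp (x i) + #(univ.erase i) • (exp (x i) * exp (-c)) :=
        add_le_add_right (sum_le_card_nsmul _ _ _ hrest) _
    _ = exp (x i) * (1 + (Fintype.card ι - 1) * exp (-c)) := by
        rw [nsmul_eq_mul, cast_card_erase_of_mem (mem_univ i), card_univ]
        ring

theorem one_div_le_exp_div_sum_exp_of_forall_ne_le_sub (x : ι → ℝ) (i : ι) (c : ℝ)
    (hgap : ∀ j ≠ i, x j ≤ x i - c) :
    1 / (1 + (Fintype.card ι - 1) * exp (-c)) ≤ exp (x i) / ∑ j, exp (x j) := by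
  have hcard : (1 : ℝ) ≤ Fintype.card ι := by exact_mod_cast Fintype.card_pos_iff.2 ⟨i⟩
  have hden : 0 < 1 + (Fintype.card ι - 1) * exp (-c) := by positivity
  have hsum : 0 < ∑ j, exp (x j) := sum_pos (fun j _ => exp_pos _) ⟨i, mem_univ i⟩
  rw [div_le_div_iff₀ hden hsum, one_mul]
  exact sum_exp_le_of_forall_ne_le_sub x i c hgap

theorem softmax_max_action_lower_bound_general
    (n : ℕ) (u : Fin n → ℝ) (τ : ℝ) (hτ : 0 < τ)
    (istar : Fin n)
    (hne : (Finset.univ.erase istar).Nonempty)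
    (Δ : ℝ)
    (hΔdef : Δ = (Finset.univ.erase istar).inf' hne (fun i => u istar - u i)) :
    1 / (1 + ((n : ℝ) - 1) * Real.exp (-Δ / τ)) ≤
      Real.exp (u istar / τ) / (∑ j, Real.exp (u j / τ)) := by
  have hgap : ∀ j ≠ istar, u j / τ ≤ u istar / τ - Δ / τ := fun j hj => by
    have hΔle : Δ ≤ u istar - u j := hΔdef ▸ inf'_le _ (mem_erase.2 ⟨hj, mem_univ j⟩)
    rw [← sub_div]
    exact div_le_div_of_nonneg_right (by linarith) hτ.le
  simpa only [Fintype.card_fin, neg_div] using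
    one_div_le_exp_div_sum_exp_of_forall_ne_le_sub (fun j => u j / τ) istar (Δ / τ) hgap

/-- **Softmax concentration and action-probability gap** (paper's Lemma A.4,
quantitative bound).  For utilities `u : Fin n → ℝ` with unique maximizer `i*`,
utility gap `Δ = min_{i ≠ i*} (u i* - u i) > 0` and temperature `τ > 0`, the
softmax probability of the maximal action satisfies
`π_τ(i*) ≥ 1 / (1 + (n - 1) exp (-Δ/τ))`. -/
theorem softmax_max_action_lower_bound
    (n : ℕ) (hn : 2 ≤ n) (u : Fin n → ℝ) (τ : ℝ) (hτ : 0 < τ)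
    (istar : Fin n) (hmax : ∀ i, i ≠ istar → u i < u istar)
    (hne : (Finset.univ.erase istar).Nonempty)
    (Δ : ℝ)
    (hΔdef : Δ = (Finset.univ.erase istar).inf' hne (fun i => u istar - u i))
    (hΔpos : 0 < Δ) :
    1 / (1 + ((n : ℝ) - 1) * Real.exp (-Δ / τ)) ≤
      Real.exp (u istar / τ) / (∑ j, Real.exp (u j / τ)) :=
  softmax_max_action_lower_bound_general n u τ hτ istar hne Δ hΔdef
end

section
/- Let n ≥ 2, u : Fin n → ℝ, and let i* be an index with u i < u i* for all i ≠ i*. Then the softmax probability of the maximal action converges to 1 in the low-temperature limit: the function τ ↦ π_τ(i*) tends to 1 as τ → 0 from the right (i.e. along the filter of positive reals approaching 0). -/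
open Filter Topology Real

/-! Dividing numerator and denominator by `exp (u i* / τ)` turns the softmax weight of `i*` into
`(∑ j, exp ((u j - u i*) / τ))⁻¹`. Each summand with `j ≠ i*` has a negative exponent numerator and
so vanishes as `τ → 0⁺`, while the summand `j = i*` is `1`; hence the weight tends to `1⁻¹ = 1`. -/

theorem tendsto_exp_div_nhdsGT_zero_of_neg {c : ℝ} (hc : c < 0) :
    Tendsto (fun τ : ℝ => exp (c / τ)) (𝓝[>] 0) (𝓝 0) := by
  have hdiv : Tendsto (fun τ : ℝ => c / τ) (𝓝[>] 0) atBot := by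
    simpa only [div_eq_mul_inv] using tendsto_inv_nhdsGT_zero.const_mul_atTop_of_neg hc
  exact tendsto_exp_atBot.comp hdiv

section Softmax

variable {ι : Type*} [Fintype ι] (u : ι → ℝ) (i : ι)

theorem exp_div_div_sum_exp_div_eq_inv_sum (τ : ℝ) :
    exp (u i / τ) / ∑ j, exp (u j / τ) = (∑ j, exp ((u j - u i) / τ))⁻¹ := by
  simp only [sub_div, exp_sub, ← Finset.sum_div, inv_div]

theorem tendsto_sum_exp_sub_div_nhdsGT_zero [DecidableEq ι] (hmax : ∀ j, j ≠ i → u j < u i) :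
    Tendsto (fun τ : ℝ => ∑ j, exp ((u j - u i) / τ)) (𝓝[>] 0) (𝓝 1) := by
  have hterm : ∀ j, Tendsto (fun τ : ℝ => exp ((u j - u i) / τ)) (𝓝[>] 0)
      (𝓝 (if j = i then 1 else 0)) := by
    intro j
    by_cases hj : j = i
    · simp [hj]
    · simpa only [if_neg hj] using tendsto_exp_div_nhdsGT_zero_of_neg (sub_neg.mpr (hmax j hj))
  simpa only [Finset.sum_ite_eq', Finset.mem_univ, if_true] using
    tendsto_finsetSum Finset.univ fun j _ => hterm j

end Softmax

theorem softmax_max_action_low_temperature_limit_general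
    (n : ℕ) (u : Fin n → ℝ)
    (istar : Fin n) (hmax : ∀ i, i ≠ istar → u i < u istar) :
    Tendsto
      (fun τ : ℝ => Real.exp (u istar / τ) / (∑ j, Real.exp (u j / τ)))
      (nhdsWithin 0 (Set.Ioi 0)) (nhds 1) := by
  simp_rw [exp_div_div_sum_exp_div_eq_inv_sum u istar]
  simpa only [inv_one] using (tendsto_sum_exp_sub_div_nhdsGT_zero u istar hmax).inv₀ one_ne_zero

/-- **Low-temperature limit of the softmax policy** (limit statement of the
paper's Lemma A.4).  For utilities `u : Fin n → ℝ` with unique maximizer `i*`,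
the softmax probability of the maximal action tends to `1` as the temperature
`τ` tends to `0` from the right. -/
theorem softmax_max_action_low_temperature_limit
    (n : ℕ) (hn : 2 ≤ n) (u : Fin n → ℝ)
    (istar : Fin n) (hmax : ∀ i, i ≠ istar → u i < u istar) :
    Tendsto
      (fun τ : ℝ => Real.exp (u istar / τ) / (∑ j, Real.exp (u j / τ)))
      (nhdsWithin 0 (Set.Ioi 0)) (nhds 1) :=
  softmax_max_action_low_temperature_limit_general n u istar hmax
end
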